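/- Let λ ≠ 0, μ real, η ∈ ℝ² nonzero, η* = θη, A(u) = λI + (μ-u)θ, v(u) = -uA(u)⁻¹η, and B = {v : |v + η*| ≤ √((λ²+μ²)/λ²)|η|}. If w lies in the closure of ℝ² \ B, w ≠ v(u), and λs > 0, then |e^{sA(u)}(w - v(u)) + v(u) + η*| > |w + η*|. -/

import Mathlib

noncomputable section
open Real Matrix

def toV (x : Fin 2 → ℝ) : EuclideanSpace ℝ (Fin 2) := WithLp.toLp 2 x

def th : Matrix (Fin 2) (Fin 2) ℝ := !![0, -1; 1, 0]

/-!
Identify `ℝ²` with `ℂ` through the basis `(1, i)`. Then `θ` is multiplication by `i`, `A(u)` is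
multiplication by `z = λ + i(μ - u)`, and `e^{sA(u)}` is multiplication by `e^{sz}`. With
`P = w + iη` and `B = v(u) + iη = (iλ - μ)η / z` the claim becomes `‖P‖ < ‖e^a (P - B) + B‖`
for `a = sz`, where the hypothesis on `w` reads `‖B‖ ‖a‖ ≤ ‖P‖ Re a`. Writing
`e^a (P - B) + B = e^a P - (e^a - 1) B`, this follows from the triangle inequality and the
estimate `‖e^a - 1‖ Re a < (e^{Re a} - 1) ‖a‖`, valid for `Re a > 0` and `Im a ≠ 0`; for real
`a` one expands `‖P + (e^a - 1)(P - B)‖²` instead.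
-/

theorem Real.sq_mul_exp_lt_sq_exp_sub_one {x : ℝ} (hx : 0 < x) :
    x ^ 2 * exp x < (exp x - 1) ^ 2 := by
  have hsinh : x / 2 < sinh (x / 2) := self_lt_sinh_iff.2 (by linarith)
  have hsq : exp (x / 2) ^ 2 = exp x := by rw [← exp_nat_mul]; ring_nf
  have hinv : exp (x / 2) * exp (-(x / 2)) = 1 := by rw [← exp_add]; simp
  -- `exp x - 1 = 2 exp (x / 2) sinh (x / 2)`
  have hlt : x * exp (x / 2) < exp x - 1 := by
    have := mul_lt_mul_of_pos_right hsinh (exp_pos (x / 2))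
    rw [sinh_eq] at this
    nlinarith
  calc x ^ 2 * exp x = (x * exp (x / 2)) ^ 2 := by rw [mul_pow, hsq]
    _ < (exp x - 1) ^ 2 := pow_lt_pow_left₀ hlt (by positivity) two_ne_zero

theorem Complex.norm_exp_sub_one_mul_re_lt {a : ℂ} (hre : 0 < a.re) (him : a.im ≠ 0) :
    ‖exp a - 1‖ * a.re < (Real.exp a.re - 1) * ‖a‖ := by
  set x := a.re
  set y := a.im
  have hex : 0 < Real.exp x - 1 := sub_pos.2 (Real.one_lt_exp_iff.2 hre)
  refine lt_of_pow_lt_pow_left₀ 2 (by positivity) ?_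
  have hnorm_a : ‖a‖ ^ 2 = x ^ 2 + y ^ 2 := by rw [Complex.sq_norm, normSq_apply]; ring
  have hnorm_exp : ‖exp a - 1‖ ^ 2 = (Real.exp x - 1) ^ 2 + 2 * Real.exp x * (1 - Real.cos y) := by
    rw [Complex.sq_norm, normSq_apply, sub_re, sub_im, exp_re, exp_im, one_re, one_im]
    linear_combination Real.exp x ^ 2 * Real.sin_sq_add_cos_sq y
  have hcos : 2 * (1 - Real.cos y) ≤ y ^ 2 := by linarith [Real.one_sub_sq_div_two_le_cos (x := y)]
  have hy : 0 < y ^ 2 := by positivity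
  have := Real.sq_mul_exp_lt_sq_exp_sub_one hre
  rw [mul_pow, mul_pow, hnorm_a, hnorm_exp]
  nlinarith [mul_le_mul_of_nonneg_left hcos (by positivity : 0 ≤ Real.exp x * x ^ 2),
    mul_lt_mul_of_pos_right this hy]

theorem norm_lt_norm_smul_sub_add {E : Type*} [NormedAddCommGroup E] [InnerProductSpace ℝ E]
    {P B : E} {t : ℝ} (ht : 1 < t) (hBP : ‖B‖ ≤ ‖P‖) (hPB : P ≠ B) :
    ‖P‖ < ‖t • (P - B) + B‖ := by
  have hsplit : t • (P - B) + B = P + (t - 1) • (P - B) := by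
    rw [sub_smul, one_smul]; abel
  have hinner : 0 ≤ inner ℝ P (P - B) := by
    rw [inner_sub_right, real_inner_self_eq_norm_sq]
    nlinarith [real_inner_le_norm P B, norm_nonneg P]
  have hD : 0 < ‖P - B‖ := norm_pos_iff.2 (sub_ne_zero.2 hPB)
  refine lt_of_pow_lt_pow_left₀ 2 (norm_nonneg _) ?_
  rw [hsplit, norm_add_sq_real, inner_smul_right, norm_smul, Real.norm_eq_abs,
    abs_of_pos (sub_pos.2 ht)]
  nlinarith [mul_pos (mul_pos (sub_pos.2 ht) (sub_pos.2 ht)) (mul_pos hD hD)]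

theorem norm_lt_norm_mul_sub_add {𝕜 : Type*} [NormedDivisionRing 𝕜] {ζ P B : 𝕜}
    (h : ‖ζ - 1‖ * ‖B‖ < (‖ζ‖ - 1) * ‖P‖) : ‖P‖ < ‖ζ * (P - B) + B‖ :=
  calc ‖P‖ < ‖ζ‖ * ‖P‖ - ‖ζ - 1‖ * ‖B‖ := by linarith
    _ = ‖ζ * P‖ - ‖(ζ - 1) * B‖ := by rw [norm_mul, norm_mul]
    _ ≤ ‖ζ * P - (ζ - 1) * B‖ := norm_sub_norm_le _ _
    _ = ‖ζ * (P - B) + B‖ := by congr 1; noncomm_ring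

theorem Complex.norm_lt_norm_exp_mul_sub_add {a P B : ℂ} (ha : 0 < a.re)
    (hBP : ‖B‖ * ‖a‖ ≤ ‖P‖ * a.re) (hPB : P ≠ B) : ‖P‖ < ‖exp a * (P - B) + B‖ := by
  have hP : 0 < ‖P‖ := by
    refine norm_pos_iff.2 fun hP0 => hPB ?_
    have ha0 : 0 < ‖a‖ := norm_pos_iff.2 fun h => by simp [h] at ha
    rw [hP0, norm_zero, zero_mul] at hBP
    rw [hP0, eq_comm, ← norm_eq_zero]
    nlinarith [norm_nonneg B]
  by_cases him : a.im = 0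
  -- for real `a` the bound on `‖exp a - 1‖` is an equality, and strictness comes from `P ≠ B`
  · obtain ⟨x, rfl⟩ : ∃ x : ℝ, a = x := ⟨a.re, ext rfl (by simp [him])⟩
    rw [ofReal_re] at ha hBP
    rw [norm_real, Real.norm_of_nonneg ha.le] at hBP
    rw [← ofReal_exp, ← real_smul]
    exact norm_lt_norm_smul_sub_add (Real.one_lt_exp_iff.2 ha)
      (le_of_mul_le_mul_right hBP ha) hPB
  · apply norm_lt_norm_mul_sub_add
    rw [norm_exp]
    have ha0 : 0 < ‖a‖ := norm_pos_iff.2 fun h => by simp [h] at ha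
    have := mul_lt_mul_of_pos_right (norm_exp_sub_one_mul_re_lt ha him) hP
    refine lt_of_mul_lt_mul_right ?_ ha0.le
    nlinarith [mul_le_mul_of_nonneg_left hBP (norm_nonneg (exp a - 1))]

theorem Algebra.leftMulMatrix_inv {R S ι : Type*} [CommRing R] [Field S] [Algebra R S]
    [Fintype ι] [DecidableEq ι] (b : Module.Basis ι R S) (x : S) :
    (leftMulMatrix b x)⁻¹ = leftMulMatrix b x⁻¹ := by
  rcases eq_or_ne x 0 with rfl | hx
  · simp
  · exact Matrix.inv_eq_right_inv (by rw [← map_mul, mul_inv_cancel₀ hx, map_one])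

theorem Complex.leftMulMatrix_basisOneI_mk (x y : ℝ) :
    Algebra.leftMulMatrix basisOneI ⟨x, y⟩ = x • (1 : Matrix (Fin 2) (Fin 2) ℝ) + y • th := by
  rw [Algebra.leftMulMatrix_complex]
  ext i j
  fin_cases i <;> fin_cases j <;> simp [th]

theorem Complex.leftMulMatrix_basisOneI_I : Algebra.leftMulMatrix basisOneI I = th :=
  (leftMulMatrix_basisOneI_mk 0 1).trans (by simp)

theorem Algebra.leftMulMatrix_mulVec_equivFun {R S ι : Type*} [CommRing R] [Ring S]
    [Algebra R S] [Fintype ι] [DecidableEq ι] (b : Module.Basis ι R S) (x y : S) :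
    leftMulMatrix b x *ᵥ b.equivFun y = b.equivFun (x * y) :=
  leftMulMatrix_mulVec_repr b x y

theorem Complex.exp_leftMulMatrix_basisOneI (z : ℂ) :
    NormedSpace.exp (Algebra.leftMulMatrix basisOneI z) =
      Algebra.leftMulMatrix basisOneI (exp z) := by
  let := Matrix.linftyOpNormedRing (n := Fin 2) (α := ℝ)
  let := Matrix.linftyOpNormedAlgebra (n := Fin 2) (R := ℝ) (α := ℝ)
  rw [exp_eq_exp_ℂ]
  exact (NormedSpace.map_exp (Algebra.leftMulMatrix basisOneI)
    (Algebra.leftMulMatrix basisOneI).toLinearMap.continuous_of_finiteDimensional z).symm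

theorem Complex.norm_toV_basisOneI_equivFun (z : ℂ) : ‖toV (basisOneI.equivFun z)‖ = ‖z‖ := by
  rw [← toBasis_orthonormalBasisOneI, OrthonormalBasis.coe_toBasis_repr]
  exact orthonormalBasisOneI.repr.norm_map z

theorem Complex.norm_add_I_mul_lt_norm_exp_mul_sub_add {lam mu u s : ℝ} (hs : 0 < lam * s)
    {z V η W : ℂ} (hz : z = ⟨lam, mu - u⟩) (hV : V = -u * (z⁻¹ * η))
    (hW : √((lam ^ 2 + mu ^ 2) / lam ^ 2) * ‖η‖ ≤ ‖W + I * η‖) (hWV : W ≠ V) :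
    ‖W + I * η‖ < ‖exp (s * z) * (W - V) + V + I * η‖ := by
  have hlam : lam ≠ 0 := by rintro rfl; simp at hs
  have hs0 : s ≠ 0 := by rintro rfl; simp at hs
  have hz0 : z ≠ 0 := fun h => hlam (by simpa [hz] using congrArg re h)
  have hB : V + I * η = ⟨-mu, lam⟩ * η / z := by
    have hIz : I * z - u = ⟨-mu, lam⟩ := by rw [hz]; apply Complex.ext <;> simp
    rw [← hIz, hV]
    field_simp
    ring
  have hnorm_mk : ‖(⟨-mu, lam⟩ : ℂ)‖ = √(lam ^ 2 + mu ^ 2) := by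
    rw [norm_def, normSq_mk]; ring_nf
  have hsqrt : √((lam ^ 2 + mu ^ 2) / lam ^ 2) = √(lam ^ 2 + mu ^ 2) / |lam| := by
    rw [Real.sqrt_div' _ (sq_nonneg lam), Real.sqrt_sq_eq_abs]
  have hre : (s * z).re = |s| * |lam| := by
    rw [hz, ← abs_mul, abs_of_pos (by linarith)]; simp [mul_comm]
  have hBP : ‖V + I * η‖ * ‖(s : ℂ) * z‖ ≤ ‖W + I * η‖ * (s * z).re := by
    rw [hB, hre, norm_mul, norm_real, Real.norm_eq_abs, norm_div, norm_mul, hnorm_mk]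
    rw [hsqrt] at hW
    have hz' : 0 < ‖z‖ := norm_pos_iff.2 hz0
    have hl : 0 < |lam| := abs_pos.2 hlam
    calc √(lam ^ 2 + mu ^ 2) * ‖η‖ / ‖z‖ * (|s| * ‖z‖)
        = √(lam ^ 2 + mu ^ 2) / |lam| * ‖η‖ * (|s| * |lam|) := by field_simp
      _ ≤ ‖W + I * η‖ * (|s| * |lam|) := by gcongr
  have hPB : W + I * η ≠ V + I * η := fun h => hWV (add_right_cancel h)
  have ha : 0 < (s * z).re := by rw [hre]; exact mul_pos (abs_pos.2 hs0) (abs_pos.2 hlam)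
  calc ‖W + I * η‖ < ‖exp (s * z) * (W + I * η - (V + I * η)) + (V + I * η)‖ :=
        norm_lt_norm_exp_mul_sub_add ha hBP hPB
    _ = ‖exp (s * z) * (W - V) + V + I * η‖ := by ring_nf

theorem stmt11_general (lam mu : ℝ) (eta : Fin 2 → ℝ)
    (A : ℝ → Matrix (Fin 2) (Fin 2) ℝ)
    (hA : ∀ u, A u = lam • (1 : Matrix (Fin 2) (Fin 2) ℝ) + (mu - u) • th)
    (v : ℝ → Fin 2 → ℝ) (hv : ∀ u, v u = (-u) • ((A u)⁻¹.mulVec eta))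
    (etaStar : Fin 2 → ℝ) (hetaStar : etaStar = th.mulVec eta)
    (u s : ℝ) (hs : lam * s > 0) (w : Fin 2 → ℝ)
    (hw : ‖toV (w + etaStar)‖ ≥ Real.sqrt ((lam ^ 2 + mu ^ 2) / lam ^ 2) * ‖toV eta‖)
    (hwv : w ≠ v u) :
    ‖toV ((NormedSpace.exp (s • A u)).mulVec (w - v u) + v u + etaStar)‖ >
      ‖toV (w + etaStar)‖ := by
  set z : ℂ := ⟨lam, mu - u⟩
  obtain ⟨W, rfl⟩ := Complex.basisOneI.equivFun.surjective w
  obtain ⟨η, rfl⟩ := Complex.basisOneI.equivFun.surjective eta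
  have hAu : A u = Algebra.leftMulMatrix Complex.basisOneI z := by
    rw [hA, Complex.leftMulMatrix_basisOneI_mk]
  have hvu : v u = Complex.basisOneI.equivFun (-u * (z⁻¹ * η)) := by
    rw [hv, hAu, Algebra.leftMulMatrix_inv, Algebra.leftMulMatrix_mulVec_equivFun, ← map_smul,
      Complex.real_smul, Complex.ofReal_neg]
  have hstar : etaStar = Complex.basisOneI.equivFun (Complex.I * η) := by
    rw [hetaStar, ← Complex.leftMulMatrix_basisOneI_I, Algebra.leftMulMatrix_mulVec_equivFun]
  have hexp : NormedSpace.exp (s • A u) =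
      Algebra.leftMulMatrix Complex.basisOneI (Complex.exp (s * z)) := by
    rw [hAu, ← map_smul, Complex.real_smul, Complex.exp_leftMulMatrix_basisOneI]
  rw [hstar, ← map_add] at hw
  rw [hvu, hstar, hexp, ← map_sub, Algebra.leftMulMatrix_mulVec_equivFun, ← map_add, ← map_add,
    ← map_add]
  rw [hvu, ne_eq, Complex.basisOneI.equivFun.injective.eq_iff] at hwv
  simp only [Complex.norm_toV_basisOneI_equivFun] at hw ⊢
  exact Complex.norm_add_I_mul_lt_norm_exp_mul_sub_add hs rfl rfl hw hwv

/-- Let `λ ≠ 0`, `η ≠ 0`, `η* = θη`, `A(u) = λI + (μ-u)θ`, `v(u) = -uA(u)⁻¹η` and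
`B = {v : |v + η*| ≤ √((λ²+μ²)/λ²)|η|}`. If `w` lies in the closure of `ℝ² \ B`
(i.e. `|w + η*| ≥ √((λ²+μ²)/λ²)|η|`), `w ≠ v(u)` and `λs > 0`, then
`|e^{sA(u)}(w - v(u)) + v(u) + η*| > |w + η*|`. -/
theorem stmt11 (lam mu : ℝ) (hlam : lam ≠ 0) (eta : Fin 2 → ℝ) (heta : eta ≠ 0)
    (A : ℝ → Matrix (Fin 2) (Fin 2) ℝ)
    (hA : ∀ u, A u = lam • (1 : Matrix (Fin 2) (Fin 2) ℝ) + (mu - u) • th)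
    (v : ℝ → Fin 2 → ℝ) (hv : ∀ u, v u = (-u) • ((A u)⁻¹.mulVec eta))
    (etaStar : Fin 2 → ℝ) (hetaStar : etaStar = th.mulVec eta)
    (u s : ℝ) (hs : lam * s > 0) (w : Fin 2 → ℝ)
    (hw : ‖toV (w + etaStar)‖ ≥ Real.sqrt ((lam ^ 2 + mu ^ 2) / lam ^ 2) * ‖toV eta‖)
    (hwv : w ≠ v u) :
    ‖toV ((NormedSpace.exp (s • A u)).mulVec (w - v u) + v u + etaStar)‖ >
      ‖toV (w + etaStar)‖ :=
  stmt11_general lam mu eta A hA v hv etaStar hetaStar u s hs w hw hwv
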